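/- Let p ≥ 1, m ∈ ℕ, let Q be a convex body in ℝ^m containing the origin, and let f_k, f ∈ W^{1,p}(ℝⁿ). If f_k → f in W^{1,p}(ℝⁿ), then θ ↦ (∫_{ℝⁿ} h_Q((∇f_k(x))^tθ)^p dx)^{1/p} converges uniformly on S^{nm-1} to θ ↦ (∫_{ℝⁿ} h_Q((∇f(x))^tθ)^p dx)^{1/p}; i.e., the (L^p,Q)-LYZ projection bodies Π^Q_p f_k converge to Π^Q_p f in the Hausdorff metric. -/

import Mathlib

open MeasureTheory Metric Real Filter
open scoped RealInnerProductSpace ENNReal NNReal Topology Classical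

noncomputable section

/-- `ℝⁿ` with the Euclidean structure. -/
abbrev En (n : ℕ) : Type := EuclideanSpace ℝ (Fin n)

/-- `ℝ^{nm}`, whose points are identified with `n × m` real matrices. -/
abbrev Enm (n m : ℕ) : Type := EuclideanSpace ℝ (Fin n × Fin m)

/-- The product `vᵀθ ∈ ℝᵐ` of `v ∈ ℝⁿ` with `θ ∈ ℝ^{nm}` viewed as an `n × m` matrix. -/
def tmul {n m : ℕ} (v : En n) (θ : Enm n m) : En m :=
  (WithLp.equiv 2 (Fin m → ℝ)).symm (fun j => ∑ i, v i * θ (i, j))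

/-- Support function of a set `Q`. -/
def suppFn {d : ℕ} (Q : Set (En d)) (x : En d) : ℝ :=
  sSup ((fun y => ⟪x, y⟫) '' Q)

/-- A convex body: a compact convex set with nonempty interior. -/
def IsConvexBody {d : ℕ} (K : Set (En d)) : Prop :=
  Convex ℝ K ∧ IsCompact K ∧ (interior K).Nonempty

/-- `ω_n`, the volume of the Euclidean unit ball of `ℝⁿ`. -/
def ballVol (n : ℕ) : ℝ := (volume (Metric.ball (0 : En n) 1)).toReal

/-- The polar `(L^p,Q)`-projection body of a Borel measure `ν` on `ℝⁿ`. -/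
def polarProjMeasure (n m : ℕ) (p : ℝ) (Q : Set (En m)) (ν : Measure (En n)) :
    Set (Enm n m) :=
  {x | (∫ v, suppFn Q (tmul v x) ^ p ∂ν) ≤ 1}

/-- The polar `(L^p,Q)`-projection body of the Euclidean unit ball of `ℝⁿ`. -/
def polarProjBall (n m : ℕ) (p : ℝ) (Q : Set (En m)) : Set (Enm n m) :=
  {x | (∫ v in sphere (0 : En n) 1, suppFn Q (tmul v x) ^ p ∂μH[(n : ℝ) - 1]) ≤ 1}

/-- The constant `d_{n,p}(Q)`. -/
def dConst (n m : ℕ) (p : ℝ) (Q : Set (En m)) : ℝ :=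
  ((n : ℝ) * ballVol n) ^ (1 / p) *
    ((n * m : ℝ) * (volume (polarProjBall n m p Q)).toReal) ^ (1 / (n * m : ℝ))

/-- The `m`th-order `L^p` affine energy `E_p(Q,f)`, as a function of the weak gradient of `f`. -/
def affineEnergy (n m : ℕ) (p : ℝ) (Q : Set (En m)) (gf : En n → En n) : ℝ :=
  dConst n m p Q *
    (∫ θ in sphere (0 : Enm n m) 1,
        (∫ z, suppFn Q (tmul (gf z) θ) ^ p) ^ (-(n * m : ℝ) / p) ∂μH[(n * m : ℝ) - 1]) ^
      (-(1 / (n * m : ℝ)))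

/-- The `L^p(ℝⁿ)` norm of a scalar function. -/
def lpNorm {n : ℕ} (p : ℝ) (f : En n → ℝ) : ℝ := (∫ x, |f x| ^ p) ^ (1 / p)

/-- The `L^p(ℝⁿ)` norm of a vector field. -/
def vlpNorm {n : ℕ} (p : ℝ) (gf : En n → En n) : ℝ := (∫ x, ‖gf x‖ ^ p) ^ (1 / p)

/-- The `L^∞(ℝⁿ)` norm. -/
def linftyNorm {n : ℕ} (f : En n → ℝ) : ℝ := (eLpNorm f ⊤ volume).toReal

/-- `gf` is the weak gradient of `f`. -/
def IsWeakGrad {n : ℕ} (f : En n → ℝ) (gf : En n → En n) : Prop :=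
  ∀ ψ : En n → ℝ, ContDiff ℝ (⊤ : ℕ∞) ψ → HasCompactSupport ψ →
    ∫ x, f x • gradient ψ x = -∫ x, ψ x • gf x

/-- `f ∈ W^{1,p}(ℝⁿ)` with weak gradient `gf`. -/
def MemW1p {n : ℕ} (p : ℝ) (f : En n → ℝ) (gf : En n → En n) : Prop :=
  MemLp f (ENNReal.ofReal p) volume ∧ MemLp gf (ENNReal.ofReal p) volume ∧ IsWeakGrad f gf

/-- `f ∈ W^{1,∞}(ℝⁿ)` with weak gradient `gf`. -/
def MemW1inf {n : ℕ} (f : En n → ℝ) (gf : En n → En n) : Prop :=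
  MemLp f ⊤ volume ∧ MemLp gf ⊤ volume ∧ IsWeakGrad f gf

/-- The distribution function `μ_f(t) = vol_n {x : |f x| > t}`. -/
def distribFn {n : ℕ} (f : En n → ℝ) (t : ℝ) : ℝ≥0∞ := volume {x : En n | t < |f x|}

/-- The decreasing rearrangement `f^*`. -/
def decRearr {n : ℕ} (f : En n → ℝ) (s : ℝ) : ℝ :=
  sSup {t : ℝ | 0 < t ∧ ENNReal.ofReal s < distribFn f t}

/-- The spherically symmetric rearrangement `f^⋆`. -/
def symRearr {n : ℕ} (f : En n → ℝ) (x : En n) : ℝ :=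
  decRearr f (ballVol n * ‖x‖ ^ (n : ℝ))

/-- The convex symmetrization `f^K` of `f` with respect to `K`. -/
def convexSym {n : ℕ} (f : En n → ℝ) (K : Set (En n)) (x : En n) : ℝ :=
  decRearr f ((volume K).toReal * gauge K x ^ (n : ℝ))

/-- The support function of the `(L^p,Q)`-LYZ projection body `Π^Q_p f`. -/
def lyzSupp (n m : ℕ) (p : ℝ) (Q : Set (En m)) (gf : En n → En n) (θ : Enm n m) : ℝ :=
  (∫ x, suppFn Q (tmul (gf x) θ) ^ p) ^ (1 / p)

/-- The `(L^p,Q)`-LYZ projection body `Π^Q_p f`. -/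
def lyzBody (n m : ℕ) (p : ℝ) (Q : Set (En m)) (gf : En n → En n) : Set (Enm n m) :=
  {y | ∀ θ : Enm n m, ⟪θ, y⟫ ≤ lyzSupp n m p Q gf θ}

/-- The polar `(L^p,Q)`-LYZ projection body `Π^{∘,Q}_p f`. -/
def polarLYZ (n m : ℕ) (p : ℝ) (Q : Set (En m)) (gf : En n → En n) : Set (Enm n m) :=
  {x | (∫ z, suppFn Q (tmul (gf z) x) ^ p) ≤ 1}

/-- The support function of the `(L^p,Q)`-centroid body `Γ^Q_p L`. -/
def centroidSupp (n m : ℕ) (p : ℝ) (Q : Set (En m)) (L : Set (Enm n m)) (v : En n) : ℝ :=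
  ((volume L).toReal⁻¹ * ∫ x in L, suppFn Q (tmul v x) ^ p) ^ (1 / p)

/-- The `(L^p,Q)`-centroid body `Γ^Q_p L`. -/
def centroidBody (n m : ℕ) (p : ℝ) (Q : Set (En m)) (L : Set (Enm n m)) : Set (En n) :=
  {y | ∀ v : En n, ⟪v, y⟫ ≤ centroidSupp n m p Q L v}

/-- A choice of outer unit normal of `K` at a boundary point `y`. -/
def outerNormalAt {n : ℕ} (K : Set (En n)) (y : En n) : En n :=
  if h : ∃ u : En n, ‖u‖ = 1 ∧ ∀ x ∈ K, ⟪x, u⟫ ≤ ⟪y, u⟫ then h.choose else 0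

/-- The polar `(L^p,Q)`-projection body `Π^{∘,Q}_p K` of a convex body `K`,
defined via the `L^p` surface area measure `dσ_{K,p} = h_K^{1-p} dσ_K`. -/
def polarProjBody (n m : ℕ) (p : ℝ) (Q : Set (En m)) (K : Set (En n)) : Set (Enm n m) :=
  {x | (∫ y in frontier K,
      suppFn Q (tmul (outerNormalAt K y) x) ^ p * suppFn K (outerNormalAt K y) ^ (1 - p)
        ∂μH[(n : ℝ) - 1]) ≤ 1}

/-- An origin-symmetric ellipsoid: a nondegenerate linear image of the unit ball. -/
def IsOSEllipsoid {n : ℕ} (E : Set (En n)) : Prop :=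
  ∃ A : En n ≃ₗ[ℝ] En n, E = (↑A : En n → En n) '' Metric.closedBall (0 : En n) 1

/-- A star body in `ℝ^{nm}`. -/
def IsStarBody {n m : ℕ} (L : Set (Enm n m)) : Prop :=
  IsCompact L ∧ (0 : Enm n m) ∈ interior L ∧
    ∀ x ∈ L, ∀ t : ℝ, 0 ≤ t → t ≤ 1 → t • x ∈ L

/-- The sharp constant `a_{n,p}` of the Euclidean `L^p` Sobolev inequality
(with `a_{n,1} = lim_{p→1⁺} a_{n,p} = n ω_n^{1/n}`). -/
def aConst (n : ℕ) (p : ℝ) : ℝ :=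
  if p = 1 then (n : ℝ) * ballVol n ^ (1 / (n : ℝ))
  else (n : ℝ) ^ (1 / p) * (((n : ℝ) - p) / (p - 1)) ^ ((p - 1) / p) *
    (ballVol n / Gamma n * Gamma ((n : ℝ) / p) * Gamma ((n : ℝ) + 1 - (n : ℝ) / p)) ^ (1 / (n : ℝ))

/-- The sharp Morrey-Sobolev constant `b_{n,p}`. -/
def bConst (n : ℕ) (p : ℝ) : ℝ :=
  (n : ℝ) ^ (-(1 / p)) * ballVol n ^ (-(1 / (n : ℝ))) * ((p - 1) / (p - (n : ℝ))) ^ ((p - 1) / p)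

/-- The sharp log-Sobolev constant `c_{n,p}` (with `c_{n,1} = lim_{p→1⁺} c_{n,p}`). -/
def cLogSob (n : ℕ) (p : ℝ) : ℝ :=
  if p = 1 then (1 / (n : ℝ)) * (Gamma (1 + (n : ℝ) / 2) / π ^ ((n : ℝ) / 2)) ^ (1 / (n : ℝ))
  else (p / n) ^ (1 / p) * ((p - 1) / exp 1) ^ (1 - 1 / p) *
    (Gamma (1 + (n : ℝ) / 2) / (π ^ ((n : ℝ) / 2) * Gamma (1 + (n : ℝ) * (p - 1) / p)))
      ^ (1 / (n : ℝ))

/-- The Moser-Trudinger constant `m_n`: the supremum of `∫_0^∞ e^{φ(t)^{n/(n-1)} - t} dt`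
over nondecreasing locally absolutely continuous `φ` with `φ(0) = 0` and `∫_0^∞ φ'(t)^n dt ≤ 1`
(such `φ` being exactly the primitives `φ(t) = ∫_0^t ψ` of nonnegative `ψ` with `∫ ψ^n ≤ 1`). -/
def moserConst (n : ℕ) : ℝ :=
  sSup {r : ℝ | ∃ ψ : ℝ → ℝ, Measurable ψ ∧ (∀ t, 0 ≤ ψ t) ∧
    (∫ t in Set.Ioi (0 : ℝ), ψ t ^ (n : ℝ)) ≤ 1 ∧
    r = ∫ t in Set.Ioi (0 : ℝ),
      exp ((∫ s in Set.Ioc (0 : ℝ) t, ψ s) ^ ((n : ℝ) / ((n : ℝ) - 1)) - t)}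

/-- `d_{n,∞}(Q) = lim_{p→∞} d_{n,p}(Q)`. -/
def dInfty (n m : ℕ) (Q : Set (En m)) : ℝ :=
  limUnder atTop (fun p : ℝ => dConst n m p Q)

/-- The `(L^∞,Q)` affine energy `E_∞(Q,f)`. -/
def affineEnergyInf (n m : ℕ) (Q : Set (En m)) (gf : En n → En n) : ℝ :=
  dInfty n m Q *
    (∫ θ in sphere (0 : Enm n m) 1,
        (eLpNorm (fun x => suppFn Q (tmul (gf x) θ)) ⊤ volume).toReal ^ (-(n * m : ℝ))
          ∂μH[(n * m : ℝ) - 1]) ^ (-(1 / (n * m : ℝ)))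

/-- The sharp Gagliardo-Nirenberg constant `α_{n,p}(r,q)`. -/
def alphaGN (n : ℕ) (p q : ℝ) : ℝ :=
  let r := p * (q - 1) / (p - 1)
  let θ := (n : ℝ) * (q - p) / ((q - 1) * ((n : ℝ) * p - ((n : ℝ) - p) * q))
  let δ := (n : ℝ) * p - q * ((n : ℝ) - p)
  (p * q / δ) ^ (1 / r) *
    ((p * Real.sqrt π / (q - p)) * ((n : ℝ) * (q - p) / (p * q)) ^ (1 / p) *
      (Gamma (δ * (p - 1) / (p * (q - p))) * Gamma (1 + (n : ℝ) * (p - 1) / p) /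
        (Gamma (q * (p - 1) / (q - p)) * Gamma (1 + (n : ℝ) / 2))) ^ (1 / (n : ℝ))) ^ θ

/-- Membership in `W_0^{1,p,q}(ℝⁿ)`: approximability by smooth compactly supported functions
in the norm `‖∇f‖_{L^p} + ‖f‖_{L^q}`. -/
def MemW01pq {n : ℕ} (p q : ℝ) (f : En n → ℝ) (gf : En n → En n) : Prop :=
  ∃ φ : ℕ → En n → ℝ,
    (∀ k, ContDiff ℝ (⊤ : ℕ∞) (φ k) ∧ HasCompactSupport (φ k)) ∧
    Tendsto (fun k => lpNorm q (fun x => φ k x - f x)) atTop (𝓝 0) ∧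
    Tendsto (fun k => vlpNorm p (fun x => gradient (φ k) x - gf x)) atTop (𝓝 0)

/-- Membership in `W_0^{1,p}(Ω)`. -/
def MemW01pOn {n : ℕ} (Ω : Set (En n)) (p : ℝ) (f : En n → ℝ) (gf : En n → En n) : Prop :=
  ∃ φ : ℕ → En n → ℝ,
    (∀ k, ContDiff ℝ (⊤ : ℕ∞) (φ k) ∧ HasCompactSupport (φ k) ∧ tsupport (φ k) ⊆ Ω) ∧
    Tendsto (fun k => lpNorm p (fun x => φ k x - f x)) atTop (𝓝 0) ∧
    Tendsto (fun k => vlpNorm p (fun x => gradient (φ k) x - gf x)) atTop (𝓝 0)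

/-- `Ω` has Lipschitz boundary: near each boundary point the boundary is a Lipschitz graph
over a hyperplane, with `Ω` lying on one side along the graph direction. -/
def HasLipschitzBoundary {n : ℕ} (Ω : Set (En n)) : Prop :=
  ∀ x ∈ frontier Ω, ∃ r : ℝ, 0 < r ∧ ∃ u : En n, ‖u‖ = 1 ∧ ∃ M : ℝ,
    (∀ y ∈ frontier Ω ∩ ball x r, ∀ z ∈ frontier Ω ∩ ball x r,
      |⟪y - z, u⟫| ≤ M * ‖(y - z) - ⟪y - z, u⟫ • u‖) ∧
    (∀ y ∈ Ω ∩ ball x r, ∀ z ∈ frontier Ω ∩ ball x r,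
      (y - z) - ⟪y - z, u⟫ • u = 0 → ⟪y - z, u⟫ < 0)

/-- `u` is a (nonconstant) radial Neumann eigenfunction of `-Δ` on the unit ball of `ℝⁿ`
with eigenvalue `l`, written in the radial variable. -/
def NeumannRadialEigen (n : ℕ) (l : ℝ) (u : ℝ → ℝ) : Prop :=
  ContDiffOn ℝ 2 u (Set.Icc 0 1) ∧ (∃ r ∈ Set.Icc (0 : ℝ) 1, deriv u r ≠ 0) ∧
  (∀ r ∈ Set.Ioo (0 : ℝ) 1,
    deriv (deriv u) r + ((n : ℝ) - 1) / r * deriv u r + l * u r = 0) ∧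
  deriv u 1 = 0

/-- The extremal functions of the affine Morrey-Sobolev inequality. -/
def morreyExtremal {n : ℕ} (p a : ℝ) (x₀ : En n) (A : En n ≃ₗ[ℝ] En n) (x : En n) : ℝ :=
  a * max (1 - ‖A x - x₀‖ ^ ((p - (n : ℝ)) / (p - 1))) 0

/-- The extremal functions of the Faber-Krahn inequality for `E_∞`. -/
def fkExtremal {n : ℕ} (a : ℝ) (x₀ : En n) (A : En n ≃ₗ[ℝ] En n) (x : En n) : ℝ :=
  a * max (1 - ‖A (x - x₀)‖) 0

/-- The extremal functions of the log-Sobolev inequality. -/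
def lsExtremal {n : ℕ} (p a : ℝ) (x₀ : En n) (x : En n) : ℝ :=
  (π ^ ((n : ℝ) / 2) * Gamma (1 + (n : ℝ) / 2)) /
      (a ^ ((n : ℝ) * (p - 1) / p) * Gamma (1 + (n : ℝ) * (p - 1) / p)) *
    exp (-(1 / a) * ‖x - x₀‖ ^ (p / (p - 1)))

/-- The extremal functions of Nash's inequality. -/
def nashExtremal {n : ℕ} (u : ℝ → ℝ) (x₀ : En n) (x : En n) : ℝ :=
  if ‖x‖ ≤ 1 then u ‖x - x₀‖ - u 1 else 0

/-- The extremal functions of the Gagliardo-Nirenberg inequalities. -/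
def gnExtremal {n : ℕ} (p q a b : ℝ) (x₀ : En n) (x : En n) : ℝ :=
  a * (1 + b * ‖x - x₀‖ ^ (p / (p - 1))) ^ (-(p - 1) / (q - p))

lemma tmul_apply {n m : ℕ} (v : En n) (θ : Enm n m) (j : Fin m) :
    tmul v θ j = ∑ i, v i * θ (i, j) := rfl

lemma tmul_sub {n m : ℕ} (v w : En n) (θ : Enm n m) :
    tmul (v - w) θ = tmul v θ - tmul w θ := by
  ext j
  simp [tmul_apply, sub_mul, Finset.sum_sub_distrib]

lemma norm_tmul_le {n m : ℕ} (v : En n) (θ : Enm n m) : ‖tmul v θ‖ ≤ ‖v‖ * ‖θ‖ := by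
  have h1 : ‖tmul v θ‖ = Real.sqrt (∑ j, (tmul v θ j) ^ 2) := by
    rw [EuclideanSpace.norm_eq]
    simp_rw [Real.norm_eq_abs, sq_abs]
  have h2 : ∑ j, (tmul v θ j) ^ 2 ≤ (∑ i, (v i) ^ 2) * (∑ q, (θ q) ^ 2) := by
    calc ∑ j, (tmul v θ j) ^ 2 ≤ ∑ j, ((∑ i, (v i) ^ 2) * (∑ i, (θ (i, j)) ^ 2)) := by
          refine Finset.sum_le_sum fun j _ => ?_
          rw [tmul_apply]
          exact Finset.sum_mul_sq_le_sq_mul_sq _ _ _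
      _ = (∑ i, (v i) ^ 2) * (∑ j, ∑ i, (θ (i, j)) ^ 2) := by rw [Finset.mul_sum]
      _ = (∑ i, (v i) ^ 2) * (∑ q, (θ q) ^ 2) := by
          rw [Fintype.sum_prod_type]
          congr 1
          exact Finset.sum_comm
  rw [h1]
  calc Real.sqrt (∑ j, (tmul v θ j) ^ 2) ≤ Real.sqrt ((∑ i, (v i) ^ 2) * (∑ q, (θ q) ^ 2)) :=
        Real.sqrt_le_sqrt h2
    _ = Real.sqrt (∑ i, (v i) ^ 2) * Real.sqrt (∑ q, (θ q) ^ 2) := by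
        rw [Real.sqrt_mul (by positivity)]
    _ = ‖v‖ * ‖θ‖ := by
        rw [EuclideanSpace.norm_eq, EuclideanSpace.norm_eq]
        simp_rw [Real.norm_eq_abs, sq_abs]

section suppFn
variable {d : ℕ} {Q : Set (En d)} {R : ℝ}

lemma suppFn_ub (hQR : ∀ y ∈ Q, ‖y‖ ≤ R) (x : En d) :
    ∀ z ∈ (fun y => ⟪x, y⟫) '' Q, z ≤ ‖x‖ * R := by
  rintro z ⟨y, hy, rfl⟩
  calc ⟪x, y⟫ ≤ ‖x‖ * ‖y‖ := real_inner_le_norm x y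
    _ ≤ ‖x‖ * R := by
        have := hQR y hy
        have h0 : (0:ℝ) ≤ ‖x‖ := norm_nonneg x
        nlinarith

lemma suppFn_nonneg (hQ0 : (0 : En d) ∈ Q) (hQR : ∀ y ∈ Q, ‖y‖ ≤ R) (x : En d) :
    0 ≤ suppFn Q x := by
  have h0 : (0:ℝ) ∈ (fun y => ⟪x, y⟫) '' Q := ⟨0, hQ0, inner_zero_right x⟩
  exact le_csSup ⟨‖x‖ * R, suppFn_ub hQR x⟩ h0

lemma suppFn_le (hQ0 : (0 : En d) ∈ Q) (hQR : ∀ y ∈ Q, ‖y‖ ≤ R) (x : En d) :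
    suppFn Q x ≤ R * ‖x‖ := by
  rw [mul_comm]
  exact csSup_le (Set.Nonempty.image _ ⟨0, hQ0⟩) (suppFn_ub hQR x)

lemma suppFn_add_le (hQ0 : (0 : En d) ∈ Q) (hQR : ∀ y ∈ Q, ‖y‖ ≤ R) (a b : En d) :
    suppFn Q (a + b) ≤ suppFn Q a + suppFn Q b := by
  refine csSup_le (Set.Nonempty.image _ ⟨0, hQ0⟩) ?_
  rintro z ⟨y, hy, rfl⟩
  simp only [inner_add_left]
  exact add_le_add (le_csSup ⟨‖a‖ * R, suppFn_ub hQR a⟩ ⟨y, hy, rfl⟩)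
    (le_csSup ⟨‖b‖ * R, suppFn_ub hQR b⟩ ⟨y, hy, rfl⟩)

lemma suppFn_lip (hQ0 : (0 : En d) ∈ Q) (hQR : ∀ y ∈ Q, ‖y‖ ≤ R) (u v : En d) :
    |suppFn Q u - suppFn Q v| ≤ R * ‖u - v‖ := by
  have key : ∀ a b : En d, suppFn Q a - suppFn Q b ≤ R * ‖a - b‖ := by
    intro a b
    have h1 : suppFn Q a ≤ suppFn Q b + suppFn Q (a - b) := by
      have := suppFn_add_le hQ0 hQR b (a - b)
      rwa [add_sub_cancel] at this
    have h2 := suppFn_le hQ0 hQR (a - b)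
    linarith
  rw [abs_sub_le_iff]
  refine ⟨key u v, ?_⟩
  have := key v u
  rwa [norm_sub_rev] at this

end suppFn

section key
variable {n m : ℕ} {p : ℝ} {Q : Set (En m)} {R : ℝ}

lemma suppFn_tmul_lip (hR : 0 ≤ R) (hQ0 : (0 : En m) ∈ Q) (hQR : ∀ y ∈ Q, ‖y‖ ≤ R)
    {θ : Enm n m} (hθ : ‖θ‖ = 1) (u v : En n) :
    |suppFn Q (tmul u θ) - suppFn Q (tmul v θ)| ≤ R * ‖u - v‖ := by
  calc |suppFn Q (tmul u θ) - suppFn Q (tmul v θ)| ≤ R * ‖tmul u θ - tmul v θ‖ :=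
        suppFn_lip hQ0 hQR _ _
    _ = R * ‖tmul (u - v) θ‖ := by rw [tmul_sub]
    _ ≤ R * ‖u - v‖ := by
        have h := norm_tmul_le (u - v) θ
        rw [hθ, mul_one] at h
        exact mul_le_mul_of_nonneg_left h hR

lemma memLp_comp (hR : 0 ≤ R) (hQ0 : (0 : En m) ∈ Q) (hQR : ∀ y ∈ Q, ‖y‖ ≤ R)
    {θ : Enm n m} (hθ : ‖θ‖ = 1) {P : ℝ≥0∞} {g : En n → En n} (hg : MemLp g P volume) :
    MemLp (fun x => suppFn Q (tmul (g x) θ)) P volume := by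
  have hcont : Continuous fun v : En n => suppFn Q (tmul v θ) := by
    refine (LipschitzWith.of_dist_le_mul (K := Real.toNNReal R) fun u v => ?_).continuous
    rw [Real.dist_eq, dist_eq_norm, Real.coe_toNNReal _ hR]
    exact suppFn_tmul_lip hR hQ0 hQR hθ u v
  refine MemLp.of_le_mul (c := R) hg (hcont.comp_aestronglyMeasurable hg.aestronglyMeasurable) ?_
  filter_upwards with x
  rw [Real.norm_eq_abs, abs_of_nonneg (suppFn_nonneg hQ0 hQR _)]
  calc suppFn Q (tmul (g x) θ) ≤ R * ‖tmul (g x) θ‖ := suppFn_le hQ0 hQR _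
    _ ≤ R * ‖g x‖ := by
        have h := norm_tmul_le (g x) θ
        rw [hθ, mul_one] at h
        exact mul_le_mul_of_nonneg_left h hR

lemma lyz_eq_eLpNorm (hp : 1 ≤ p) (hR : 0 ≤ R) (hQ0 : (0 : En m) ∈ Q)
    (hQR : ∀ y ∈ Q, ‖y‖ ≤ R) {θ : Enm n m} (hθ : ‖θ‖ = 1) {g : En n → En n}
    (hg : MemLp g (ENNReal.ofReal p) volume) :
    lyzSupp n m p Q g θ
      = (eLpNorm (fun x => suppFn Q (tmul (g x) θ)) (ENNReal.ofReal p) volume).toReal := by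
  have hp0 : (0:ℝ) ≤ p := by linarith
  have hP0 : ENNReal.ofReal p ≠ 0 := by
    simp only [ne_eq, ENNReal.ofReal_eq_zero, not_le]; linarith
  rw [(memLp_comp hR hQ0 hQR hθ hg).eLpNorm_eq_integral_rpow_norm hP0 ENNReal.ofReal_ne_top,
    ENNReal.toReal_ofReal, ENNReal.toReal_ofReal hp0]
  · unfold lyzSupp
    rw [one_div]
    congr 1
    refine integral_congr_ae (Filter.Eventually.of_forall fun x => ?_)
    show suppFn Q (tmul (g x) θ) ^ p = ‖suppFn Q (tmul (g x) θ)‖ ^ p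
    rw [Real.norm_eq_abs, abs_of_nonneg (suppFn_nonneg hQ0 hQR _)]
  · exact Real.rpow_nonneg
      (integral_nonneg fun a => Real.rpow_nonneg (norm_nonneg _) _) _

lemma vlp_eq_eLpNorm (hp : 1 ≤ p) {d : En n → En n}
    (hd : MemLp d (ENNReal.ofReal p) volume) :
    vlpNorm p d = (eLpNorm d (ENNReal.ofReal p) volume).toReal := by
  have hp0 : (0:ℝ) ≤ p := by linarith
  have hP0 : ENNReal.ofReal p ≠ 0 := by
    simp only [ne_eq, ENNReal.ofReal_eq_zero, not_le]; linarith
  rw [hd.eLpNorm_eq_integral_rpow_norm hP0 ENNReal.ofReal_ne_top,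
    ENNReal.toReal_ofReal, ENNReal.toReal_ofReal hp0]
  · unfold vlpNorm
    rw [one_div]
  · exact Real.rpow_nonneg
      (integral_nonneg fun a => Real.rpow_nonneg (norm_nonneg _) _) _

lemma lyz_key (hp : 1 ≤ p) (hR : 0 ≤ R) (hQ0 : (0 : En m) ∈ Q)
    (hQR : ∀ y ∈ Q, ‖y‖ ≤ R) {θ : Enm n m} (hθ : ‖θ‖ = 1) {g₁ g₂ : En n → En n}
    (h₁ : MemLp g₁ (ENNReal.ofReal p) volume) (h₂ : MemLp g₂ (ENNReal.ofReal p) volume) :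
    |lyzSupp n m p Q g₁ θ - lyzSupp n m p Q g₂ θ|
      ≤ R * vlpNorm p (fun x => g₁ x - g₂ x) := by
  set P : ℝ≥0∞ := ENNReal.ofReal p with hP
  have hP1 : 1 ≤ P := ENNReal.one_le_ofReal.mpr hp
  set φ₁ : En n → ℝ := fun x => suppFn Q (tmul (g₁ x) θ) with hφ₁d
  set φ₂ : En n → ℝ := fun x => suppFn Q (tmul (g₂ x) θ) with hφ₂d
  have hφ₁ : MemLp φ₁ P volume := memLp_comp hR hQ0 hQR hθ h₁
  have hφ₂ : MemLp φ₂ P volume := memLp_comp hR hQ0 hQR hθ h₂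
  set d : En n → En n := fun x => g₁ x - g₂ x with hdd
  have hd : MemLp d P volume := h₁.sub h₂
  have hφd : MemLp (fun x => φ₁ x - φ₂ x) P volume := hφ₁.sub hφ₂
  have hmono : eLpNorm (fun x => φ₁ x - φ₂ x) P volume ≤ eLpNorm (R • d) P volume := by
    refine eLpNorm_mono fun x => ?_
    rw [Real.norm_eq_abs, Pi.smul_apply, norm_smul, Real.norm_eq_abs, abs_of_nonneg hR]
    exact suppFn_tmul_lip hR hQ0 hQR hθ (g₁ x) (g₂ x)
  have hsmul : eLpNorm (R • d) P volume = (‖R‖₊ : ℝ≥0∞) * eLpNorm d P volume :=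
    eLpNorm_const_smul R d P volume
  have hfin : ((‖R‖₊ : ℝ≥0∞) * eLpNorm d P volume) ≠ ⊤ :=
    ENNReal.mul_ne_top ENNReal.coe_ne_top hd.2.ne
  have e3 : (eLpNorm (fun x => φ₁ x - φ₂ x) P volume).toReal
      ≤ R * (eLpNorm d P volume).toReal := by
    calc (eLpNorm (fun x => φ₁ x - φ₂ x) P volume).toReal
        ≤ ((‖R‖₊ : ℝ≥0∞) * eLpNorm d P volume).toReal :=
          ENNReal.toReal_mono hfin (hmono.trans_eq hsmul)
      _ = R * (eLpNorm d P volume).toReal := by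
          rw [ENNReal.toReal_mul, ENNReal.coe_toReal, coe_nnnorm, Real.norm_eq_abs,
            abs_of_nonneg hR]
  have tri : ∀ (a b : En n → ℝ), MemLp a P volume → MemLp b P volume →
      (eLpNorm a P volume).toReal ≤ (eLpNorm b P volume).toReal
        + (eLpNorm (fun x => a x - b x) P volume).toReal := by
    intro a b ha hb
    have hab : MemLp (fun x => a x - b x) P volume := ha.sub hb
    have t1 : eLpNorm a P volume
        ≤ eLpNorm b P volume + eLpNorm (fun x => a x - b x) P volume := by
      have : a = fun x => b x + (a x - b x) := by funext x; ring
      calc eLpNorm a P volume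
          = eLpNorm (fun x => b x + (a x - b x)) P volume := by rw [← this]
        _ ≤ _ := eLpNorm_add_le hb.aestronglyMeasurable hab.aestronglyMeasurable hP1
    rw [← ENNReal.toReal_add hb.2.ne hab.2.ne]
    exact ENNReal.toReal_mono (ENNReal.add_ne_top.mpr ⟨hb.2.ne, hab.2.ne⟩) t1
  have hswap : eLpNorm (fun x => φ₂ x - φ₁ x) P volume
      = eLpNorm (fun x => φ₁ x - φ₂ x) P volume := by
    have : (fun x => φ₂ x - φ₁ x) = -(fun x => φ₁ x - φ₂ x) := by funext x; simp
    rw [this, eLpNorm_neg]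
  rw [lyz_eq_eLpNorm hp hR hQ0 hQR hθ h₁, lyz_eq_eLpNorm hp hR hQ0 hQR hθ h₂,
    vlp_eq_eLpNorm hp hd, abs_sub_le_iff]
  constructor
  · have := tri φ₁ φ₂ hφ₁ hφ₂
    linarith
  · have := tri φ₂ φ₁ hφ₂ hφ₁
    rw [hswap] at this
    linarith

end key

/-- continuity of the LYZ projection body in `W^{1,p}`. -/
theorem stmt5 (n m : ℕ) (hn : 1 ≤ n) (hm : 1 ≤ m) (p : ℝ) (hp : 1 ≤ p)
    (Q : Set (En m)) (hQ : IsConvexBody Q) (hQ0 : (0 : En m) ∈ Q)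
    (F : ℕ → En n → ℝ) (GF : ℕ → En n → En n) (f : En n → ℝ) (gf : En n → En n)
    (hFk : ∀ k, MemW1p p (F k) (GF k)) (hf : MemW1p p f gf)
    (hconv : Tendsto (fun k => lpNorm p (fun x => F k x - f x) +
      vlpNorm p (fun x => GF k x - gf x)) atTop (𝓝 0)) :
    TendstoUniformlyOn (fun k θ => lyzSupp n m p Q (GF k) θ)
      (lyzSupp n m p Q gf) atTop (sphere (0 : Enm n m) 1) := by
  obtain ⟨r, hr⟩ := hQ.2.1.isBounded.subset_closedBall 0
  set R := max r 0 with hRdef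
  have hR : 0 ≤ R := le_max_right _ _
  have hQR : ∀ y ∈ Q, ‖y‖ ≤ R := fun y hy => by
    have h1 := hr hy
    rw [mem_closedBall, dist_zero_right] at h1
    exact h1.trans (le_max_left _ _)
  have hnn1 : ∀ k, 0 ≤ lpNorm p (fun x => F k x - f x) := fun k =>
    Real.rpow_nonneg (integral_nonneg fun x => Real.rpow_nonneg (abs_nonneg _) _) _
  have hnn2 : ∀ k, 0 ≤ vlpNorm p (fun x => GF k x - gf x) := fun k =>
    Real.rpow_nonneg (integral_nonneg fun x => Real.rpow_nonneg (norm_nonneg _) _) _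
  have hv : Tendsto (fun k => vlpNorm p (fun x => GF k x - gf x)) atTop (𝓝 0) :=
    squeeze_zero hnn2 (fun k => le_add_of_nonneg_left (hnn1 k)) hconv
  have hRv : Tendsto (fun k => R * vlpNorm p (fun x => GF k x - gf x)) atTop (𝓝 0) := by
    simpa using hv.const_mul R
  rw [Metric.tendstoUniformlyOn_iff]
  intro ε hε
  filter_upwards [hRv.eventually (gt_mem_nhds hε)] with k hk θ hθ
  have hθ1 : ‖θ‖ = 1 := mem_sphere_zero_iff_norm.mp hθ
  rw [Real.dist_eq, abs_sub_comm]
  exact lt_of_le_of_lt (lyz_key hp hR hQ0 hQR hθ1 (hFk k).2.1 hf.2.1) hk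

end
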